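/- Let S, X, Y form a Markov chain S ↔ X ↔ Y on finite alphabets and let d(s,y) be the log-loss −log P_y(s) where each y encodes a distribution P_y on the S-alphabet. If additionally S is a deterministic function of X (i.e., H(S|X) = 0), then for every D ∈ [0, H(S)], the indirect rate-distortion function satisfies R(D) ≥ H(S) − D, where R(D) = min{ I(X;Y) : E[d̄(X,Y)] ≤ D } and d̄(x,y) = E[d(S,y)|X=x]. -/

import Mathlib

open BigOperators

/-- A conditional distribution (channel) on finite alphabets. -/
def IsChannel {𝒳 𝒴 : Type*} [Fintype 𝒴] (W : 𝒳 → 𝒴 → ℝ) : Prop :=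
  (∀ x y, 0 ≤ W x y) ∧ ∀ x, ∑ y, W x y = 1

/-- Mutual information `I(X;Y)` for input distribution `p` and channel `W`. -/
noncomputable def mutualInfoFin {𝒳 𝒴 : Type*} [Fintype 𝒳] [Fintype 𝒴]
    (p : 𝒳 → ℝ) (W : 𝒳 → 𝒴 → ℝ) : ℝ :=
  ∑ x, ∑ y, p x * W x y * Real.log (W x y / (∑ x', p x' * W x' y))

/-- Shannon entropy of a distribution on a finite alphabet. -/
noncomputable def entropyFin {𝒮 : Type*} [Fintype 𝒮] (q : 𝒮 → ℝ) : ℝ :=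
  -∑ s, q s * Real.log (q s)

/-!
Let `q` be the law of `S = f X`, `P` the output law, `μ(x,y) = p(x) W(x,y)` and
`ν(x,y) = p(x) P(y) ρ_y(f x) / q(f x)`. Then `I(X;Y) + E[-log ρ_Y(S)] - H(S) = ∑ μ log (μ / ν)`,
and `ν` has mass at most that of `μ`, since `∑ₓ p(x) ρ_y(f x) / q(f x) = ∑_{q(s) > 0} ρ_y(s) ≤ 1`.
Gibbs' inequality therefore makes this gap nonnegative.
-/

open Finset Real

lemma sub_le_mul_log_div {a b : ℝ} (ha : 0 ≤ a) (hb : 0 ≤ b) (hab : 0 < a → 0 < b) :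
    a - b ≤ a * log (a / b) := by
  rcases ha.eq_or_lt with rfl | ha
  · simpa using hb
  · have hb := hab ha
    calc a - b = a * (1 - (a / b)⁻¹) := by field_simp
      _ ≤ a * log (a / b) := by gcongr; exact one_sub_inv_le_log_of_pos (by positivity)

lemma sum_sub_sum_le_sum_mul_log_div {ι : Type*} [Fintype ι] {a b : ι → ℝ}
    (ha : ∀ i, 0 ≤ a i) (hb : ∀ i, 0 ≤ b i) (hab : ∀ i, 0 < a i → 0 < b i) :
    ∑ i, a i - ∑ i, b i ≤ ∑ i, a i * log (a i / b i) := by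
  rw [← sum_sub_distrib]
  exact sum_le_sum fun i _ => sub_le_mul_log_div (ha i) (hb i) (hab i)

section Marginal

variable {𝒳 𝒮 : Type*} [Fintype 𝒳] [DecidableEq 𝒮]

def marginal (p : 𝒳 → ℝ) (f : 𝒳 → 𝒮) (s : 𝒮) : ℝ :=
  ∑ x ∈ univ.filter (fun x => f x = s), p x

lemma marginal_nonneg {p : 𝒳 → ℝ} (hp : ∀ x, 0 ≤ p x) (f : 𝒳 → 𝒮) (s : 𝒮) :
    0 ≤ marginal p f s :=
  sum_nonneg fun x _ => hp x

lemma le_marginal {p : 𝒳 → ℝ} (hp : ∀ x, 0 ≤ p x) (f : 𝒳 → 𝒮) (x : 𝒳) :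
    p x ≤ marginal p f (f x) :=
  single_le_sum (fun i _ => hp i) (by simp)

variable [Fintype 𝒮]

lemma sum_mul_comp_eq_sum_marginal_mul (p : 𝒳 → ℝ) (f : 𝒳 → 𝒮) (g : 𝒮 → ℝ) :
    ∑ x, p x * g (f x) = ∑ s, marginal p f s * g s := by
  rw [← sum_fiberwise univ f]
  refine sum_congr rfl fun s _ => ?_
  rw [marginal, sum_mul]
  exact sum_congr rfl fun x hx => by rw [(mem_filter.1 hx).2]

lemma sum_mul_log_marginal_comp (p : 𝒳 → ℝ) (f : 𝒳 → 𝒮) :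
    ∑ x, p x * log (marginal p f (f x)) = -entropyFin (marginal p f) := by
  rw [entropyFin, neg_neg, sum_mul_comp_eq_sum_marginal_mul p f (fun s => log (marginal p f s))]

lemma sum_mul_div_marginal_le {p : 𝒳 → ℝ} (hp : ∀ x, 0 ≤ p x) (f : 𝒳 → 𝒮)
    {r : 𝒮 → ℝ} (hr : ∀ s, 0 ≤ r s) :
    ∑ x, p x * (r (f x) / marginal p f (f x)) ≤ ∑ s, r s := by
  rw [sum_mul_comp_eq_sum_marginal_mul p f (fun s => r s / marginal p f s)]
  refine sum_le_sum fun s _ => ?_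
  rcases (marginal_nonneg hp f s).eq_or_lt with h | h
  · simpa [← h] using hr s
  · rw [mul_div_cancel₀ _ h.ne']

lemma sum_sum_mul_mul_div_marginal_le {𝒴 : Type*} [Fintype 𝒴] {p : 𝒳 → ℝ}
    (hp : ∀ x, 0 ≤ p x) (f : 𝒳 → 𝒮) {P : 𝒴 → ℝ} (hP : ∀ y, 0 ≤ P y)
    {ρ : 𝒴 → 𝒮 → ℝ} (hρ0 : ∀ y s, 0 ≤ ρ y s) (hρ1 : ∀ y, ∑ s, ρ y s ≤ 1) :
    ∑ x, ∑ y, p x * P y * (ρ y (f x) / marginal p f (f x)) ≤ ∑ y, P y := by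
  calc ∑ x, ∑ y, p x * P y * (ρ y (f x) / marginal p f (f x))
        = ∑ y, P y * ∑ x, p x * (ρ y (f x) / marginal p f (f x)) := by
        rw [sum_comm]
        simp only [mul_sum]
        exact sum_congr rfl fun y _ => sum_congr rfl fun x _ => by ring
    _ ≤ ∑ y, P y * 1 := by
        refine sum_le_sum fun y _ => mul_le_mul_of_nonneg_left ?_ (hP y)
        exact (sum_mul_div_marginal_le hp f (hρ0 y)).trans (hρ1 y)
    _ = ∑ y, P y := by simp

end Marginal

theorem entropyFin_marginal_le_mutualInfoFin_add_logLoss {𝒳 𝒮 𝒴 : Type*}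
    [Fintype 𝒳] [Fintype 𝒮] [Fintype 𝒴] [DecidableEq 𝒮]
    {p : 𝒳 → ℝ} (hp : ∀ x, 0 ≤ p x) (f : 𝒳 → 𝒮)
    {ρ : 𝒴 → 𝒮 → ℝ} (hρ0 : ∀ y s, 0 < ρ y s) (hρ1 : ∀ y, ∑ s, ρ y s ≤ 1)
    {W : 𝒳 → 𝒴 → ℝ} (hW : IsChannel W) :
    entropyFin (marginal p f) ≤
      mutualInfoFin p W + ∑ x, ∑ y, p x * W x y * (-log (ρ y (f x))) := by
  obtain ⟨hW0, hW1⟩ := hW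
  set q := marginal p f
  set P : 𝒴 → ℝ := fun y => ∑ x', p x' * W x' y
  set ν : 𝒳 → 𝒴 → ℝ := fun x y => p x * P y * (ρ y (f x) / q (f x))
  have hμ0 : ∀ x y, 0 ≤ p x * W x y := fun x y => mul_nonneg (hp x) (hW0 x y)
  have hP0 : ∀ y, 0 ≤ P y := fun y => sum_nonneg fun x _ => hμ0 x y
  have hν0 : ∀ x y, 0 ≤ ν x y := fun x y =>
    mul_nonneg (mul_nonneg (hp x) (hP0 y)) (div_nonneg (hρ0 y _).le (marginal_nonneg hp f _))
  have hsupp : ∀ x y, 0 < p x → 0 < W x y → 0 < q (f x) ∧ 0 < P y := fun x y hpx hWxy =>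
    ⟨hpx.trans_le (le_marginal hp f x),
      (mul_pos hpx hWxy).trans_le (single_le_sum (fun x _ => hμ0 x y) (mem_univ x))⟩
  have hμν : ∀ x y, 0 < p x * W x y → 0 < ν x y := fun x y hμ => by
    have hpx := pos_of_mul_pos_left hμ (hW0 x y)
    obtain ⟨hq, hPy⟩ := hsupp x y hpx (pos_of_mul_pos_right hμ (hp x))
    have := hρ0 y (f x)
    positivity
  have hmass : ∑ x, ∑ y, ν x y ≤ ∑ x, ∑ y, p x * W x y := by
    rw [sum_comm (f := fun x y => p x * W x y)]
    exact sum_sum_mul_mul_div_marginal_le hp f hP0 (fun y s => (hρ0 y s).le) hρ1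
  -- the last term is shaped so that its sum over `y` collapses by `∑ y, W x y = 1`
  have hlog : ∀ x y, p x * W x y * log (p x * W x y / ν x y) =
      p x * W x y * log (W x y / P y) + p x * W x y * (-log (ρ y (f x))) +
        W x y * (p x * log (q (f x))) := by
    intro x y
    rcases (hp x).eq_or_lt with hpx | hpx
    · simp [← hpx]
    rcases (hW0 x y).eq_or_lt with hWxy | hWxy
    · simp [← hWxy]
    obtain ⟨hq, hPy⟩ := hsupp x y hpx hWxy
    have hρ := hρ0 y (f x)
    have : p x * W x y / ν x y = W x y / P y * q (f x) / ρ y (f x) := by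
      simp only [ν]; field_simp
    rw [this, log_div (by positivity) hρ.ne', log_mul (by positivity) hq.ne']
    ring
  have hgibbs := sum_sub_sum_le_sum_mul_log_div (a := fun z : 𝒳 × 𝒴 => p z.1 * W z.1 z.2)
    (b := fun z => ν z.1 z.2) (fun z => hμ0 z.1 z.2) (fun z => hν0 z.1 z.2)
    (fun z => hμν z.1 z.2)
  simp only [Fintype.sum_prod_type, hlog, sum_add_distrib, ← sum_mul, hW1, one_mul] at hgibbs
  have hI : mutualInfoFin p W = ∑ x, ∑ y, p x * W x y * log (W x y / P y) := rfl
  linarith [sum_mul_log_marginal_comp p f]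

theorem indirect_rdf_logloss_lower_bound_general
    {𝒳 𝒮 𝒴 : Type*} [Fintype 𝒳] [Fintype 𝒮] [Fintype 𝒴] [DecidableEq 𝒮]
    (p : 𝒳 → ℝ) (hp0 : ∀ x, 0 ≤ p x)
    (f : 𝒳 → 𝒮)
    (ρ : 𝒴 → 𝒮 → ℝ) (hρ0 : ∀ y s, 0 < ρ y s) (hρ1 : ∀ y, ∑ s, ρ y s = 1)
    (D : ℝ)
    (hfeas : ∃ W : 𝒳 → 𝒴 → ℝ, IsChannel W ∧
      ∑ x, ∑ y, p x * W x y * (-Real.log (ρ y (f x))) ≤ D) :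
    entropyFin (fun s => ∑ x ∈ Finset.univ.filter (fun x => f x = s), p x) - D
      ≤ sInf {r | ∃ W : 𝒳 → 𝒴 → ℝ, IsChannel W ∧
          (∑ x, ∑ y, p x * W x y * (-Real.log (ρ y (f x))) ≤ D) ∧
          r = mutualInfoFin p W} := by
  obtain ⟨W₀, hW₀, hd₀⟩ := hfeas
  refine le_csInf ⟨_, W₀, hW₀, hd₀, rfl⟩ ?_
  rintro _ ⟨W, hW, hd, rfl⟩
  have hH := entropyFin_marginal_le_mutualInfoFin_add_logLoss hp0 f hρ0 (fun y => (hρ1 y).le) hW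
  exact sub_le_iff_le_add.2 (hH.trans (by linarith))

/-- indirect RDF lower bound under log-loss with a deterministic label.
`S = f(X)`, reproductions `y` encode positive distributions `ρ y` on the `S`-alphabet,
`d(s,y) = −log (ρ y s)`, so the reduced distortion is `d̄(x,y) = −log (ρ y (f x))`.
Then for every `D ∈ [0, H(S)]`,
`R(D) = min { I(X;Y) : E[d̄(X,Y)] ≤ D } ≥ H(S) − D`. -/
theorem indirect_rdf_logloss_lower_bound
    {𝒳 𝒮 𝒴 : Type*} [Fintype 𝒳] [Fintype 𝒮] [Fintype 𝒴] [DecidableEq 𝒮]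
    [Nonempty 𝒳] [Nonempty 𝒮] [Nonempty 𝒴]
    (p : 𝒳 → ℝ) (hp0 : ∀ x, 0 ≤ p x) (hp1 : ∑ x, p x = 1)
    (f : 𝒳 → 𝒮)
    (ρ : 𝒴 → 𝒮 → ℝ) (hρ0 : ∀ y s, 0 < ρ y s) (hρ1 : ∀ y, ∑ s, ρ y s = 1)
    (D : ℝ)
    (hD : D ∈ Set.Icc 0 (entropyFin (fun s => ∑ x ∈ Finset.univ.filter (fun x => f x = s), p x)))
    (hfeas : ∃ W : 𝒳 → 𝒴 → ℝ, IsChannel W ∧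
      ∑ x, ∑ y, p x * W x y * (-Real.log (ρ y (f x))) ≤ D) :
    entropyFin (fun s => ∑ x ∈ Finset.univ.filter (fun x => f x = s), p x) - D
      ≤ sInf {r | ∃ W : 𝒳 → 𝒴 → ℝ, IsChannel W ∧
          (∑ x, ∑ y, p x * W x y * (-Real.log (ρ y (f x))) ≤ D) ∧
          r = mutualInfoFin p W} :=
  indirect_rdf_logloss_lower_bound_general p hp0 f ρ hρ0 hρ1 D hfeas
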